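/- For every finite simple graph G, B_2(G) = Σ_{v ∈ V} C(deg v, 3) − k_4(G) + k_{2,2}(G), where k_{2,2}(G) is the number of 4-element vertex subsets S such that the induced subgraph G[S] is isomorphic to the complete bipartite graph K_{2,2} (equivalently, to the 4-cycle C_4). -/

import Mathlib

open Finset

/-- The `i`-th Betti number in the linear strand of the edge ideal of `G`:
`B_i(G) = Σ_{S ⊆ V, |S| = i+2} (#components of the complement of G[S] − 1)`. -/
noncomputable def linStrand {V : Type*} [Fintype V] [DecidableEq V]
    (G : SimpleGraph V) (i : ℕ) : ℕ :=
  ∑ S ∈ (Finset.univ : Finset V).powersetCard (i + 2),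
    (Nat.card ((G.induce (S : Set V))ᶜ.ConnectedComponent) - 1)

/-- The number of `m`-element vertex subsets `S` of `G` whose induced subgraph
is isomorphic to the graph `H`. -/
noncomputable def numIndIso {V W : Type*} [Fintype V] [DecidableEq V]
    (G : SimpleGraph V) (m : ℕ) (H : SimpleGraph W) : ℕ :=
  {S : Finset V | S.card = m ∧ Nonempty (G.induce (S : Set V) ≃g H)}.ncard

/-!
Fix a 4-set `S` and put `H = G[S]`. A vertex of `H` adjacent to the three others is isolated in
`Hᶜ`, and a finite check over the 64 graphs on four vertices shows that
`c(Hᶜ) - 1 = #{universal vertices of H} - [H = K₄] + [H ≅ K₂,₂]`: the only four-vertex graph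
without universal vertices whose complement is disconnected is the 4-cycle, whose complement is a
perfect matching. Summing over `S`, a universal vertex `v` of `G[S]` is the same as a 3-set
`S \ {v}` of neighbours of `v`, so the first term sums to `∑ v, C(deg v, 3)`.
-/

open SimpleGraph

namespace SimpleGraph

variable {V W X : Type*} {G : SimpleGraph V} {G' : SimpleGraph W}

def Iso.compl (φ : G ≃g G') : Gᶜ ≃g G'ᶜ where
  toEquiv := φ.toEquiv
  map_rel_iff' := by intro a b; simp [φ.injective.ne_iff, φ.map_adj_iff]

theorem Iso.card_connectedComponent_compl (φ : G ≃g G') :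
    Nat.card Gᶜ.ConnectedComponent = Nat.card G'ᶜ.ConnectedComponent :=
  Nat.card_congr φ.compl.connectedComponentEquiv

theorem Iso.isUniversal_iff (φ : G ≃g G') {v : V} : G'.IsUniversal (φ v) ↔ G.IsUniversal v := by
  simp only [IsUniversal, φ.surjective.forall, φ.injective.ne_iff, φ.map_adj_iff]

theorem Iso.card_isUniversal [Fintype V] [Fintype W] [DecidablePred G.IsUniversal]
    [DecidablePred G'.IsUniversal] (φ : G ≃g G') :
    #{v | G.IsUniversal v} = #{w | G'.IsUniversal w} := by
  simp only [← Fintype.card_subtype]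
  exact Fintype.card_congr (φ.toEquiv.subtypeEquiv fun _ => φ.isUniversal_iff.symm)

theorem Iso.eq_top_iff (φ : G ≃g G') : G = ⊤ ↔ G' = ⊤ := by
  simp only [eq_top_iff_forall_isUniversal, φ.surjective.forall, φ.isUniversal_iff]

theorem Iso.nonempty_iso_iff {K : SimpleGraph X} (φ : G ≃g G') :
    Nonempty (G ≃g K) ↔ Nonempty (G' ≃g K) :=
  ⟨fun ⟨ψ⟩ => ⟨φ.symm.trans ψ⟩, fun ⟨ψ⟩ => ⟨φ.trans ψ⟩⟩

theorem nonempty_iso_iff_exists_equiv :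
    Nonempty (G ≃g G') ↔ ∃ e : V ≃ W, ∀ v w, G'.Adj (e v) (e w) ↔ G.Adj v w :=
  ⟨fun ⟨φ⟩ => ⟨φ.toEquiv, fun _ _ => φ.map_adj_iff⟩, fun ⟨e, he⟩ => ⟨⟨e, he _ _⟩⟩⟩

instance : DecidableRel (completeBipartiteGraph V W).Adj :=
  fun _ _ => inferInstanceAs (Decidable (_ ∨ _))

end SimpleGraph

/-- A graph on `Fin 4` is coded by six bits, one per pair `{i, j}`; the diagonal of `edgeIndex`
is irrelevant since `fromRel` is irreflexive. -/
def edgeIndex : Fin 4 → Fin 4 → Fin 6 :=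
  ![![0, 0, 1, 2], ![0, 0, 3, 4], ![1, 3, 0, 5], ![2, 4, 5, 0]]

def ofEdgeCode (f : Fin 6 → Bool) : SimpleGraph (Fin 4) :=
  fromRel fun i j => f (edgeIndex i j)

instance (f : Fin 6 → Bool) : DecidableRel (ofEdgeCode f).Adj :=
  inferInstanceAs (DecidableRel (fromRel _).Adj)

open Classical in
theorem exists_ofEdgeCode_eq (H : SimpleGraph (Fin 4)) : ∃ f, ofEdgeCode f = H := by
  refine ⟨fun k => H.Adj (![0, 0, 0, 1, 1, 2] k) (![1, 2, 3, 2, 3, 3] k), ?_⟩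
  ext i j
  fin_cases i <;> fin_cases j <;> simp [ofEdgeCode, edgeIndex]
  all_goals exact H.adj_comm _ _

/-- The two conditions are decidable forms of `ofEdgeCode f = ⊤` and
`Nonempty (ofEdgeCode f ≃g completeBipartiteGraph (Fin 2) (Fin 2))`. -/
theorem card_connectedComponent_compl_ofEdgeCode (f : Fin 6 → Bool) :
    Fintype.card (ofEdgeCode f)ᶜ.ConnectedComponent
        + (if ∀ v w, v ≠ w → (ofEdgeCode f).Adj v w then 1 else 0)
      = #{v | ∀ w, v ≠ w → (ofEdgeCode f).Adj v w}
        + (if ∃ e : Fin 4 ≃ Fin 2 ⊕ Fin 2, ∀ v w,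
            (completeBipartiteGraph (Fin 2) (Fin 2)).Adj (e v) (e w) ↔ (ofEdgeCode f).Adj v w
            then 1 else 0) + 1 := by
  revert f
  decide +kernel

open Classical in
theorem card_connectedComponent_compl_of_card_eq_four {α : Type*} [Fintype α]
    (H : SimpleGraph α) (hα : Fintype.card α = 4) :
    (Nat.card Hᶜ.ConnectedComponent : ℤ) - 1 = #{v | H.IsUniversal v} - (if H = ⊤ then 1 else 0)
      + (if Nonempty (H ≃g completeBipartiteGraph (Fin 2) (Fin 2)) then 1 else 0) := by
  obtain ⟨f, hf⟩ := exists_ofEdgeCode_eq (H.map (Fintype.equivFinOfCardEq hα))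
  obtain ⟨φ⟩ : Nonempty (H ≃g ofEdgeCode f) := ⟨hf ▸ Iso.map _ H⟩
  have hcode := card_connectedComponent_compl_ofEdgeCode f
  rw [φ.card_connectedComponent_compl, φ.card_isUniversal, φ.eq_top_iff, φ.nonempty_iso_iff,
    Nat.card_eq_fintype_card, nonempty_iso_iff_exists_equiv, eq_top_iff_forall_ne_adj]
  -- the two filters differ only in their `Decidable` instances
  have huniv :
      #{v | (ofEdgeCode f).IsUniversal v} = #{v | ∀ w, v ≠ w → (ofEdgeCode f).Adj v w} := by
    congr
  split_ifs at hcode ⊢ <;> omega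

namespace SimpleGraph

variable {V : Type*} (G : SimpleGraph V)

theorem isUniversal_induce_iff {s : Set V} {v : s} :
    (G.induce s).IsUniversal v ↔ ∀ w ∈ s, (v : V) ≠ w → G.Adj v w := by
  simp [IsUniversal, Subtype.ext_iff]

variable [Fintype V] [DecidableEq V] [DecidableRel G.Adj]

theorem card_isUniversal_induce (S : Finset V)
    [DecidablePred (G.induce (S : Set V)).IsUniversal] :
    #{v : (S : Set V) | (G.induce (S : Set V)).IsUniversal v}
      = #{v ∈ S | S.erase v ⊆ G.neighborFinset v} := by
  have hiff (v : (S : Set V)) :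
      (G.induce (S : Set V)).IsUniversal v ↔ S.erase v ⊆ G.neighborFinset v := by
    rw [isUniversal_induce_iff]
    simp only [subset_iff, mem_erase, mem_neighborFinset, and_imp]
    tauto
  refine card_nbij (↑) (fun v hv => ?_) Subtype.val_injective.injOn fun w hw => ?_
  · simp_all
  · rw [coe_filter] at hw
    exact ⟨⟨w, hw.1⟩, by simpa [hiff] using hw.2, rfl⟩

theorem card_filter_mem_erase_subset_neighborFinset (m : ℕ) (v : V) :
    #{S ∈ (univ : Finset V).powersetCard (m + 1) | v ∈ S ∧ S.erase v ⊆ G.neighborFinset v}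
      = (G.degree v).choose m := by
  rw [← card_neighborFinset_eq_degree, ← card_powersetCard]
  have hv {T : Finset V} (hT : T ⊆ G.neighborFinset v) : v ∉ T :=
    fun h => G.notMem_neighborFinset_self v (hT h)
  refine card_nbij' (·.erase v) (insert v) (fun S hS => ?_) (fun T hT => ?_)
    (fun S hS => insert_erase (mem_filter.mp hS).2.1) (fun T hT => ?_)
  · simp_all [card_erase_of_mem]
  · rw [mem_coe, mem_powersetCard] at hT
    simp_all [card_insert_of_notMem (hv hT.1)]
  · rw [mem_coe, mem_powersetCard] at hT
    exact erase_insert (hv hT.1)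

theorem sum_card_filter_erase_subset_neighborFinset (m : ℕ) :
    ∑ S ∈ (univ : Finset V).powersetCard (m + 1), #{v ∈ S | S.erase v ⊆ G.neighborFinset v}
      = ∑ v, (G.degree v).choose m := by
  have hfilter (S : Finset V) : #{v ∈ S | S.erase v ⊆ G.neighborFinset v}
      = #(univ.bipartiteAbove (fun S v => v ∈ S ∧ S.erase v ⊆ G.neighborFinset v) S) := by
    congr 1
    ext
    simp [bipartiteAbove]
  simp only [hfilter, sum_card_bipartiteAbove_eq_sum_card_bipartiteBelow, bipartiteBelow,
    card_filter_mem_erase_subset_neighborFinset]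

open Classical in
theorem cliqueFinset_eq_filter_induce_eq_top (n : ℕ) :
    G.cliqueFinset n
      = ((univ : Finset V).powersetCard n).filter fun S : Finset V => G.induce (S : Set V) = ⊤ := by
  ext S
  simp only [mem_cliqueFinset_iff, isNClique_iff, mem_filter, mem_powersetCard_univ,
    induce_eq_top, and_comm]

end SimpleGraph

open Classical in
theorem numIndIso_eq_card_filter {V W : Type*} [Fintype V] [DecidableEq V] (G : SimpleGraph V)
    (m : ℕ) (H : SimpleGraph W) :
    numIndIso G m H = #(((univ : Finset V).powersetCard m).filter
      fun S : Finset V => Nonempty (G.induce (S : Set V) ≃g H)) := by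
  rw [numIndIso, ← Set.ncard_coe_finset]
  congr 1
  ext S
  simp

theorem cast_linStrand {V : Type*} [Fintype V] [DecidableEq V] (G : SimpleGraph V) (i : ℕ) :
    (linStrand G i : ℤ) = ∑ S ∈ (univ : Finset V).powersetCard (i + 2),
      ((Nat.card (G.induce (S : Set V))ᶜ.ConnectedComponent : ℤ) - 1) := by
  rw [linStrand, Nat.cast_sum]
  refine sum_congr rfl fun (S : Finset V) hS => ?_
  obtain ⟨v, hv⟩ : S.Nonempty := by
    rw [← card_pos, (mem_powersetCard_univ.mp hS)]
    omega
  have : Nonempty (S : Set V) := ⟨⟨v, hv⟩⟩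
  rw [Nat.cast_sub Nat.card_pos, Nat.cast_one]

/-- For every finite simple graph `G`,
`B_2(G) = Σ_{v ∈ V} C(deg v, 3) − k_4(G) + k_{2,2}(G)`. -/
theorem linStrand_two_eq
    {V : Type*} [Fintype V] [DecidableEq V] (G : SimpleGraph V) [DecidableRel G.Adj] :
    (linStrand G 2 : ℤ) =
      ∑ v : V, ((G.degree v).choose 3 : ℤ) - (G.cliqueFinset 4).card
        + numIndIso G 4 (completeBipartiteGraph (Fin 2) (Fin 2)) := by
  classical
  have hcard (S : Finset V) (hS : S ∈ univ.powersetCard 4) : Fintype.card (S : Set V) = 4 := by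
    simpa using mem_powersetCard_univ.mp hS
  rw [cast_linStrand, sum_congr rfl fun (S : Finset V) hS =>
      card_connectedComponent_compl_of_card_eq_four (G.induce (S : Set V)) (hcard S hS),
    sum_add_distrib, sum_sub_distrib, sum_boole, sum_boole,
    ← cliqueFinset_eq_filter_induce_eq_top, ← numIndIso_eq_card_filter]
  congr 2
  simp only [card_isUniversal_induce]
  exact_mod_cast sum_card_filter_erase_subset_neighborFinset G 3
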